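/- An allocation is maxmin and minimally fractional if and only if it is ordered and equitable. -/

import Mathlib

open Finset

/-- A valuation vector: positive entries summing to 1. -/
def IsValuation {m : ℕ} (v : Fin m → ℝ) : Prop :=
  (∀ i, 0 < v i) ∧ ∑ i, v i = 1

/-- An allocation: Alice receives fraction `w i ∈ [0,1]` of item `i`. -/
def IsAlloc {m : ℕ} (w : Fin m → ℝ) : Prop :=
  ∀ i, 0 ≤ w i ∧ w i ≤ 1

/-- Alice's utility. -/
def uA {m : ℕ} (a w : Fin m → ℝ) : ℝ := ∑ i, a i * w i

/-- Bob's utility. -/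
def uB {m : ℕ} (b w : Fin m → ℝ) : ℝ := ∑ i, b i * (1 - w i)

/-- Pareto optimality with respect to true valuations `(a, b)`. -/
def ParetoOptimal {m : ℕ} (a b w : Fin m → ℝ) : Prop :=
  ¬ ∃ w' : Fin m → ℝ, IsAlloc w' ∧ uA a w ≤ uA a w' ∧ uB b w ≤ uB b w' ∧
      (uA a w < uA a w' ∨ uB b w < uB b w')

/-- Equitable allocation: both players obtain equal utility. -/
def Equitable {m : ℕ} (a b w : Fin m → ℝ) : Prop := uA a w = uB b w

/-- At most one item is split. -/
def MinimallyFractional {m : ℕ} (w : Fin m → ℝ) : Prop :=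
  ∃ i₀ : Fin m, ∀ i, i ≠ i₀ → w i = 0 ∨ w i = 1

/-- Ordered allocation with respect to `(a, b)`: items sorted by decreasing ratio
`a i / b i` (cross-multiplied) and a boundary line at item `l` split in fraction `λ`. -/
def Ordered {m : ℕ} (a b w : Fin m → ℝ) : Prop :=
  ∃ π : Equiv.Perm (Fin m),
    (∀ i j : Fin m, i < j → a (π j) * b (π i) ≤ a (π i) * b (π j)) ∧
    ∃ l : Fin m, ∃ lam : ℝ, 0 ≤ lam ∧ lam ≤ 1 ∧
      (∀ i, i < l → w (π i) = 1) ∧ w (π l) = lam ∧ (∀ i, l < i → w (π i) = 0)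

/-- Envy-freeness with respect to `(a, b)`. -/
def EnvyFree {m : ℕ} (a b w : Fin m → ℝ) : Prop :=
  (∑ i, a i * (1 - w i)) ≤ (∑ i, a i * w i) ∧ (∑ i, b i * w i) ≤ (∑ i, b i * (1 - w i))

/-- Maxmin allocation: maximizes the minimum utility over the two players. -/
def Maxmin {m : ℕ} (a b w : Fin m → ℝ) : Prop :=
  ∀ w' : Fin m → ℝ, IsAlloc w' → min (uA a w') (uB b w') ≤ min (uA a w) (uB b w)

section auxLemmas
variable {m : ℕ}

lemma uA_le_one {a w : Fin m → ℝ} (ha : IsValuation a) (hw : IsAlloc w) : uA a w ≤ 1 := by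
  calc uA a w ≤ ∑ i, a i :=
        Finset.sum_le_sum fun i _ => mul_le_of_le_one_right (ha.1 i).le (hw i).2
    _ = 1 := ha.2

lemma uB_le_one {b w : Fin m → ℝ} (hb : IsValuation b) (hw : IsAlloc w) : uB b w ≤ 1 := by
  calc uB b w ≤ ∑ i, b i :=
        Finset.sum_le_sum fun i _ => mul_le_of_le_one_right (hb.1 i).le (by linarith [(hw i).1])
    _ = 1 := hb.2

lemma sum_bw {b w : Fin m → ℝ} (hb : IsValuation b) : ∑ i, b i * w i = 1 - uB b w := by
  have : uB b w = ∑ i, b i - ∑ i, b i * w i := by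
    simp [uB, mul_sub, Finset.sum_sub_distrib]
  rw [this, hb.2]; ring

/-- Exchange argument: at a maxmin allocation, any item partially owned by Alice has
ratio at least that of any item partially owned by Bob. -/
lemma cross_of_maxmin {a b w : Fin m → ℝ} (ha : IsValuation a) (hb : IsValuation b)
    (hw : IsAlloc w) (hmax : Maxmin a b w) {i j : Fin m}
    (hi : 0 < w i) (hj : w j < 1) : a j * b i ≤ a i * b j := by
  by_contra hlt
  push_neg at hlt
  have hij : i ≠ j := by rintro rfl; exact absurd hlt (lt_irrefl _)
  have hai := ha.1 i; have haj := ha.1 j; have hbi := hb.1 i; have hbj := hb.1 j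
  have h2 : (0:ℝ) < 2 * a j * b j := by positivity
  have h3 : (0:ℝ) < a i * b j + a j * b i := by positivity
  set t : ℝ := min (w i / (2 * a j * b j)) ((1 - w j) / (a i * b j + a j * b i)) with ht
  have htpos : 0 < t := lt_min (div_pos hi h2) (div_pos (by linarith) h3)
  set ε : ℝ := t * (2 * a j * b j) with hε
  set δ : ℝ := t * (a i * b j + a j * b i) with hδ
  have hεpos : 0 < ε := by positivity
  have hδpos : 0 < δ := by positivity
  have hεle : ε ≤ w i := by
    calc ε = t * (2 * a j * b j) := hε
      _ ≤ w i / (2 * a j * b j) * (2 * a j * b j) :=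
          mul_le_mul_of_nonneg_right (min_le_left _ _) h2.le
      _ = w i := div_mul_cancel₀ _ h2.ne'
  have hδle : δ ≤ 1 - w j := by
    calc δ = t * (a i * b j + a j * b i) := hδ
      _ ≤ (1 - w j) / (a i * b j + a j * b i) * (a i * b j + a j * b i) :=
          mul_le_mul_of_nonneg_right (min_le_right _ _) h3.le
      _ = 1 - w j := div_mul_cancel₀ _ h3.ne'
  classical
  set g : Fin m → ℝ := fun k => (if k = i then -ε else 0) + (if k = j then δ else 0) with hg
  set w' : Fin m → ℝ := fun k => w k + g k with hw'
  have hw'i : w' i = w i - ε := by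
    simp only [hw', hg, eq_self_iff_true, if_true, if_neg hij]; ring
  have hw'j : w' j = w j + δ := by
    simp only [hw', hg, eq_self_iff_true, if_true, if_neg (Ne.symm hij)]; ring
  have hw'k : ∀ k, k ≠ i → k ≠ j → w' k = w k := by
    intro k h1 h2; simp only [hw', hg, if_neg h1, if_neg h2]; ring
  have hw'alloc : IsAlloc w' := by
    intro k
    rcases eq_or_ne k i with rfl | hk
    · rw [hw'i]; exact ⟨by linarith, by linarith [(hw k).2]⟩
    · rcases eq_or_ne k j with rfl | hk'
      · rw [hw'j]; exact ⟨by linarith [(hw k).1], by linarith⟩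
      · rw [hw'k k hk hk']; exact hw k
  have h1 : uA a w' = uA a w + (a j * δ - a i * ε) := by
    have hterm : ∀ k ∈ Finset.univ, a k * w' k =
        a k * w k + ((if k = i then a k * (-ε) else 0) + (if k = j then a k * δ else 0)) := by
      intro k _
      rcases eq_or_ne k i with rfl | hk
      · rw [hw'i, if_pos rfl, if_neg hij]; ring
      · rcases eq_or_ne k j with rfl | hk'
        · rw [hw'j, if_neg hk, if_pos rfl]; ring
        · rw [hw'k k hk hk', if_neg hk, if_neg hk']; ring
    rw [uA, Finset.sum_congr rfl hterm]
    simp only [Finset.sum_add_distrib, Finset.sum_ite_eq', Finset.mem_univ, if_true]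
    rw [← uA]; ring
  have h2 : uB b w' = uB b w + (b i * ε - b j * δ) := by
    have hterm : ∀ k ∈ Finset.univ, b k * (1 - w' k) =
        b k * (1 - w k) + ((if k = i then b k * ε else 0) + (if k = j then b k * (-δ) else 0)) := by
      intro k _
      rcases eq_or_ne k i with rfl | hk
      · rw [hw'i, if_pos rfl, if_neg hij]; ring
      · rcases eq_or_ne k j with rfl | hk'
        · rw [hw'j, if_neg hk, if_pos rfl]; ring
        · rw [hw'k k hk hk', if_neg hk, if_neg hk']; ring
    rw [uB, Finset.sum_congr rfl hterm]
    simp only [Finset.sum_add_distrib, Finset.sum_ite_eq', Finset.mem_univ, if_true]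
    rw [← uB]; ring
  have hA : uA a w < uA a w' := by
    have he : a j * δ - a i * ε = t * a j * (a j * b i - a i * b j) := by rw [hδ, hε]; ring
    nlinarith [he]
  have hB : uB b w < uB b w' := by
    have he : b i * ε - b j * δ = t * b j * (a j * b i - a i * b j) := by rw [hδ, hε]; ring
    nlinarith [he]
  have hmin : min (uA a w) (uB b w) < min (uA a w') (uB b w') :=
    lt_min (lt_of_le_of_lt (min_le_left _ _) hA) (lt_of_le_of_lt (min_le_right _ _) hB)
  linarith [hmax w' hw'alloc]

lemma equitable_of_maxmin {a b w : Fin m → ℝ} (ha : IsValuation a) (hb : IsValuation b)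
    (hw : IsAlloc w) (hmax : Maxmin a b w) : Equitable a b w := by
  rcases lt_trichotomy (uA a w) (uB b w) with hlt | heq | hlt
  · -- uA < uB : move mass to Alice
    exfalso
    set T : ℝ := ∑ i, a i * (1 - w i) with hT
    have hTval : T = 1 - uA a w := by
      have h0 : uA a w = ∑ i, a i - T := by
        simp [uA, hT, mul_sub, Finset.sum_sub_distrib]
      rw [h0, ha.2]; ring
    have huA1 : uA a w ≤ 1 := uA_le_one ha hw
    have huB1 : uB b w ≤ 1 := uB_le_one hb hw
    set D : ℝ := uB b w + 1 - uA a w with hD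
    have hD1 : 1 < D := by rw [hD]; linarith
    have hDpos : (0:ℝ) < D := by linarith
    set w' : Fin m → ℝ := fun k => 1 - (1 - w k) / D with hw'
    have hw'alloc : IsAlloc w' := by
      intro k
      have h1 := (hw k).1; have h2 := (hw k).2
      have hnn : 0 ≤ (1 - w k) / D := div_nonneg (by linarith) hDpos.le
      have hle : (1 - w k) / D ≤ 1 - w k := by
        rw [div_le_iff₀ hDpos]; nlinarith
      exact ⟨by simp only [hw']; linarith, by simp only [hw']; linarith⟩
    have hA' : uA a w' = 1 - T / D := by
      have h0 : ∀ k ∈ Finset.univ, a k * w' k = a k - a k * (1 - w k) / D := by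
        intro k _; simp only [hw']; ring
      rw [uA, Finset.sum_congr rfl h0, Finset.sum_sub_distrib, ha.2]
      rw [hT, ← Finset.sum_div]
    have hB' : uB b w' = uB b w / D := by
      have h0 : ∀ k ∈ Finset.univ, b k * (1 - w' k) = b k * (1 - w k) / D := by
        intro k _; simp only [hw']; ring
      rw [uB, Finset.sum_congr rfl h0, ← Finset.sum_div, ← uB]
    have hAB : uA a w' = uB b w' := by
      have hE : uB b w + 1 - uA a w ≠ 0 := ne_of_gt (by linarith)
      rw [hA', hB', hTval, hD]
      rw [eq_div_iff hE, sub_mul, div_mul_cancel₀ _ hE]; ring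
    have hkey := hmax w' hw'alloc
    rw [hAB, min_self, hB', min_eq_left hlt.le] at hkey
    have hk2 : uB b w ≤ uA a w * D := (div_le_iff₀ hDpos).1 hkey
    nlinarith
  · exact heq
  · -- uB < uA : move mass to Bob
    exfalso
    have hS : ∑ i, b i * w i = 1 - uB b w := sum_bw hb
    have huA1 : uA a w ≤ 1 := uA_le_one ha hw
    have huB1 : uB b w ≤ 1 := uB_le_one hb hw
    set D : ℝ := uA a w + 1 - uB b w with hD
    have hD1 : 1 < D := by rw [hD]; linarith
    have hDpos : (0:ℝ) < D := by linarith
    set w' : Fin m → ℝ := fun k => w k / D with hw'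
    have hw'alloc : IsAlloc w' := by
      intro k
      have h1 := (hw k).1; have h2 := (hw k).2
      refine ⟨div_nonneg h1 hDpos.le, ?_⟩
      rw [hw']; rw [div_le_iff₀ hDpos]; nlinarith
    have hA' : uA a w' = uA a w / D := by
      have h0 : ∀ k ∈ Finset.univ, a k * w' k = a k * w k / D := fun k _ => by
        simp only [hw']; ring
      rw [uA, Finset.sum_congr rfl h0, ← Finset.sum_div, ← uA]
    have hB' : uB b w' = 1 - (1 - uB b w) / D := by
      have h0 : ∀ k ∈ Finset.univ, b k * (1 - w' k) = b k - b k * w k / D := fun k _ => by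
        simp only [hw']; ring
      rw [uB, Finset.sum_congr rfl h0, Finset.sum_sub_distrib, hb.2, ← Finset.sum_div, hS]
    have hAB : uA a w' = uB b w' := by
      have hE : uA a w + 1 - uB b w ≠ 0 := ne_of_gt (by linarith)
      rw [hA', hB', hD]; rw [div_eq_iff hE, sub_mul, div_mul_cancel₀ _ hE]; ring
    have hkey := hmax w' hw'alloc
    rw [← hAB, min_self, hA', min_eq_right hlt.le] at hkey
    have hk2 : uA a w ≤ uB b w * D := (div_le_iff₀ hDpos).1 hkey
    nlinarith


end auxLemmas

section mainLemmas
variable {m : ℕ}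

lemma ordered_of_maxmin_minfrac (hm : 1 ≤ m) {a b w : Fin m → ℝ}
    (ha : IsValuation a) (hb : IsValuation b) (hw : IsAlloc w)
    (hmax : Maxmin a b w) (hmf : MinimallyFractional w) : Ordered a b w := by
  classical
  obtain ⟨i₀, hi₀⟩ := hmf
  have hcross : ∀ i j : Fin m, 0 < w i → w j < 1 → a j * b i ≤ a i * b j :=
    fun i j hi hj => cross_of_maxmin ha hb hw hmax hi hj
  set f : Fin m → Lex (ℝ × ℝ) := fun i => toLex (b i / a i, -(w i)) with hf
  set π := Tuple.sort f with hπ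
  have hmono : Monotone (f ∘ π) := Tuple.monotone_sort f
  have hlex : ∀ i j : Fin m, i ≤ j →
      b (π i) / a (π i) < b (π j) / a (π j) ∨
      (b (π i) / a (π i) = b (π j) / a (π j) ∧ -(w (π i)) ≤ -(w (π j))) := by
    intro i j hij
    have := hmono hij
    simpa only [Function.comp, hf, ofLex_toLex] using Prod.Lex.le_iff.1 this
  have hratio : ∀ i j : Fin m, i ≤ j → b (π i) / a (π i) ≤ b (π j) / a (π j) := by
    intro i j hij
    rcases hlex i j hij with h | ⟨h, _⟩
    · exact h.le
    · exact h.le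
  have hsort : ∀ i j : Fin m, i < j → a (π j) * b (π i) ≤ a (π i) * b (π j) := by
    intro i j hij
    have h := hratio i j hij.le
    rw [div_le_div_iff₀ (ha.1 _) (ha.1 _)] at h
    linarith [h]
  have hanti : ∀ i j : Fin m, i ≤ j → w (π j) ≤ w (π i) := by
    intro i j hij
    by_contra hcon
    push_neg at hcon
    have h1 : 0 < w (π j) := lt_of_le_of_lt (hw _).1 hcon
    have h2 : w (π i) < 1 := lt_of_lt_of_le hcon (hw _).2
    have h3 := hcross (π j) (π i) h1 h2
    -- a (π i) * b (π j) ≤ a (π j) * b (π i)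
    have h4 : b (π j) / a (π j) ≤ b (π i) / a (π i) := by
      rw [div_le_div_iff₀ (ha.1 _) (ha.1 _)]
      linarith [h3]
    rcases hlex i j hij with h | ⟨_, h⟩
    · linarith
    · linarith
  set S : Finset (Fin m) := Finset.univ.filter (fun k => 0 < w (π k)) with hS
  by_cases hSne : S.Nonempty
  · set l := S.max' hSne with hl
    have hlmem : l ∈ S := S.max'_mem hSne
    have hlpos : 0 < w (π l) := (Finset.mem_filter.1 hlmem).2
    refine ⟨π, hsort, l, w (π l), (hw _).1, (hw _).2, ?_, rfl, ?_⟩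
    · intro i hil
      have hge : w (π l) ≤ w (π i) := hanti i l hil.le
      by_cases hii : π i = i₀
      · have hln : π l ≠ i₀ := by
          rw [← hii]
          intro h
          exact absurd (π.injective h).symm (ne_of_lt hil)
        rcases hi₀ _ hln with h0' | h1'
        · exact absurd h0' (by linarith)
        · rw [h1'] at hge
          exact le_antisymm (hw _).2 hge
      · rcases hi₀ _ hii with h0' | h1'
        · exact absurd h0' (by linarith [lt_of_lt_of_le hlpos hge])
        · exact h1'
    · intro i hli
      have hni : i ∉ S := fun hmem => absurd (S.le_max' i hmem) (not_le.mpr hli)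
      have : ¬ (0 < w (π i)) := fun hc => hni (Finset.mem_filter.2 ⟨Finset.mem_univ _, hc⟩)
      linarith [(hw (π i)).1]
  · have hall : ∀ k : Fin m, w (π k) = 0 := by
      intro k
      by_contra hc
      have : 0 < w (π k) := lt_of_le_of_ne (hw _).1 (Ne.symm hc)
      exact hSne ⟨k, Finset.mem_filter.2 ⟨Finset.mem_univ _, this⟩⟩
    refine ⟨π, hsort, ⟨0, hm⟩, 0, le_refl 0, zero_le_one, ?_, hall _, fun i _ => hall i⟩
    intro i hi
    exact absurd hi (by simp [Fin.lt_def])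

lemma maxmin_of_ordered_equitable {a b w : Fin m → ℝ}
    (ha : IsValuation a) (hb : IsValuation b) (hw : IsAlloc w)
    (hord : Ordered a b w) (heq : Equitable a b w) : Maxmin a b w := by
  obtain ⟨π, hsort, l, lam, _, _, h1, hl, h0⟩ := hord
  intro w' hw'
  set r := a (π l) / b (π l) with hr
  have hblpos := hb.1 (π l)
  have hrpos : 0 < r := div_pos (ha.1 _) hblpos
  have key : uA a w' - uA a w ≤ r * (uB b w - uB b w') := by
    have hterm : ∀ k : Fin m, (a (π k) - r * b (π k)) * (w' (π k) - w (π k)) ≤ 0 := by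
      intro k
      rcases lt_trichotomy k l with h | h | h
      · have hw1 : w (π k) = 1 := h1 k h
        have hs := hsort k l h
        have harb : r * b (π k) ≤ a (π k) := by
          rw [hr, div_mul_eq_mul_div, div_le_iff₀ hblpos]
          linarith [hs]
        have hd : w' (π k) - w (π k) ≤ 0 := by rw [hw1]; linarith [(hw' (π k)).2]
        exact mul_nonpos_of_nonneg_of_nonpos (by linarith) hd
      · subst h
        have : a (π k) - r * b (π k) = 0 := by
          rw [hr]; field_simp; ring
        rw [this, zero_mul]
      · have hw0 : w (π k) = 0 := h0 k h
        have hs := hsort l k h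
        have harb : a (π k) ≤ r * b (π k) := by
          rw [hr, div_mul_eq_mul_div, le_div_iff₀ hblpos]
          linarith [hs]
        have hd : 0 ≤ w' (π k) - w (π k) := by rw [hw0]; linarith [(hw' (π k)).1]
        exact mul_nonpos_of_nonpos_of_nonneg (by linarith) hd
    have hsum : ∑ k, (a (π k) - r * b (π k)) * (w' (π k) - w (π k)) ≤ 0 :=
      Finset.sum_nonpos (fun k _ => hterm k)
    rw [Equiv.sum_comp π (fun i => (a i - r * b i) * (w' i - w i))] at hsum
    have hexp : ∑ i, (a i - r * b i) * (w' i - w i) =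
        (uA a w' - uA a w) - r * (uB b w - uB b w') := by
      have h0' : ∀ i ∈ Finset.univ, (a i - r * b i) * (w' i - w i) =
          (a i * w' i - a i * w i) - r * (b i * (1 - w i) - b i * (1 - w' i)) := by
        intro i _; ring
      rw [Finset.sum_congr rfl h0']
      simp only [Finset.sum_sub_distrib, ← Finset.mul_sum]
      rfl
    rw [hexp] at hsum
    linarith
  rcases le_total (uB b w') (uB b w) with h | h
  · calc min (uA a w') (uB b w') ≤ uB b w' := min_le_right _ _
      _ ≤ uB b w := h
      _ = min (uA a w) (uB b w) := by rw [heq, min_self]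
  · have : uA a w' ≤ uA a w := by nlinarith
    calc min (uA a w') (uB b w') ≤ uA a w' := min_le_left _ _
      _ ≤ uA a w := this
      _ = min (uA a w) (uB b w) := by rw [heq, min_self]

lemma minfrac_of_ordered {a b w : Fin m → ℝ} (hord : Ordered a b w) :
    MinimallyFractional w := by
  obtain ⟨π, _, l, lam, _, _, h1, _, h0⟩ := hord
  refine ⟨π l, fun i hi => ?_⟩
  have hk : π.symm i ≠ l := by
    intro h
    apply hi
    rw [← h, Equiv.apply_symm_apply]
  rcases lt_or_gt_of_ne hk with h | h
  · right; have := h1 _ h; rwa [Equiv.apply_symm_apply] at this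
  · left; have := h0 _ h; rwa [Equiv.apply_symm_apply] at this


end mainLemmas

/-- an allocation is maxmin and minimally fractional iff it is
ordered and equitable. -/
theorem maxmin_minimallyFractional_iff_ordered_equitable (m : ℕ) (hm : 1 ≤ m)
    (a b w : Fin m → ℝ) (ha : IsValuation a) (hb : IsValuation b) (hw : IsAlloc w) :
    (Maxmin a b w ∧ MinimallyFractional w) ↔ (Ordered a b w ∧ Equitable a b w) := by
  constructor
  · rintro ⟨hmax, hmf⟩
    exact ⟨ordered_of_maxmin_minfrac hm ha hb hw hmax hmf, equitable_of_maxmin ha hb hw hmax⟩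
  · rintro ⟨hord, heq⟩
    exact ⟨maxmin_of_ordered_equitable ha hb hw hord heq, minfrac_of_ordered hord⟩
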